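/- For the reduced word 𝐢^D of type D_n: (a) for each 1 ≤ i ≤ n−1, the positive roots η preceding α_i = β_{i,i} in the induced order with (α_i | η) < 0 are exactly, in order, β_{1,i−1}, γ_{1,i+1}, β_{2,i−1}, γ_{2,i+1}, …, β_{i−1,i−1}, γ_{i−1,i+1}, with corresponding ν = η + α_i given by β_{j,i} for η = β_{j,i−1} and γ_{j,i} for η = γ_{j,i+1}; (b) for i = n, the positive roots η preceding α_n = γ_{n−1,n} in the induced order with (α_n | η) < 0 are exactly, in order, β_{1,n−2}, β_{1,n−1}, β_{2,n−2}, β_{2,n−1}, …, β_{n−2,n−2}, β_{n−2,n−1}, with ν = γ_{j,n} for η = β_{j,n−2} and ν = γ_{j,n−1} for η = β_{j,n−1}. Consequently, for any Kostant partition 𝐜, the bracket string S_i^{𝐢^D}(𝐜) is: for i ≤ n−1, the concatenation over j = 1, …, i−1 of c_{β_{j,i}} ')'s, c_{β_{j,i−1}} '('s, c_{γ_{j,i}} ')'s, c_{γ_{j,i+1}} '('s, followed by c_{β_{i,i}} ')'s; and for i = n, the concatenation over j = 1, …, n−2 of c_{γ_{j,n}} ')'s, c_{β_{j,n−2}} '('s,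 c_{γ_{j,n−1}} ')'s, c_{β_{j,n−1}} '('s, followed by c_{γ_{n−1,n}} ')'s. -/

import Mathlib

open scoped Classical

noncomputable section

/-- Standard basis vector `e i` (1-based coordinates, ambient `ℤ^n` sits inside `ℕ → ℤ`). -/
def stdE (i : ℕ) : ℕ → ℤ := fun j => if j = i then 1 else 0

/-- Type `D_n` simple roots: `α_i = e_i - e_(i+1)` for `1 ≤ i ≤ n-1`, `α_n = e_(n-1) + e_n`. -/
def alphaD (n i : ℕ) : ℕ → ℤ := if i = n then stdE (n-1) + stdE n else stdE i - stdE (i+1)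

/-- Positive root `β_(i,k) = α_i + ⋯ + α_k = e_i - e_(k+1)` (for `1 ≤ i ≤ k ≤ n-1`). -/
def betaD (i k : ℕ) : ℕ → ℤ := stdE i - stdE (k+1)

/-- Positive root `γ_(i,k) = α_i + ⋯ + α_(n-2) + α_n + α_(n-1) + ⋯ + α_k = e_i + e_k`
(for `1 ≤ i < k ≤ n`). -/
def gammaD (i k : ℕ) : ℕ → ℤ := stdE i + stdE k

/-- `β` is a positive root of type `D_n`. -/
def PosRootD (n : ℕ) (β : ℕ → ℤ) : Prop :=
  (∃ i k, 1 ≤ i ∧ i ≤ k ∧ k ≤ n-1 ∧ β = betaD i k) ∨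
  (∃ i k, 1 ≤ i ∧ i < k ∧ k ≤ n ∧ β = gammaD i k)

/-- The simple reflection `s_i` of `W(D_n)` acting on `ℤ^n`: for `i ≤ n-1` it swaps
coordinates `i` and `i+1`; `s_n` swaps coordinates `n-1` and `n` and negates both. -/
def sDap (n i : ℕ) (v : ℕ → ℤ) : ℕ → ℤ :=
  if i = n then fun j => if j = n-1 then -(v n) else if j = n then -(v (n-1)) else v j
  else fun j => if j = i then v (i+1) else if j = i+1 then v i else v j

/-- The action of the product `s_(i₁) ⋯ s_(i_N)` on a vector. -/
def actD (n : ℕ) (w : List ℕ) (v : ℕ → ℤ) : ℕ → ℤ := w.foldr (sDap n) v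

/-- The induced root sequence `β_k = s_(i₁)⋯s_(i_(k-1)) (α_(i_k))` of a word (0-indexed). -/
def rootSeqD (n : ℕ) (w : List ℕ) : List (ℕ → ℤ) :=
  (List.range w.length).map fun k => actD n (w.take k) (alphaD n (w.getD k 0))

/-- The block `(i, i+1, …, n-1, n, n-2, n-3, …, i)` of the word `𝐢^D`. -/
def blockD (n i : ℕ) : List ℕ :=
  ((List.range (n-i)).map (· + i)) ++ [n] ++ (((List.range (n-1-i)).map (· + i)).reverse)

/-- The word `𝐢^D`: the blocks `(i, i+1, …, n-1, n, n-2, …, i)` for `i = 1, …, n-2`,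
followed by `(n-1, n)`. -/
def wordD (n : ℕ) : List ℕ :=
  ((List.range (n-2)).flatMap fun i' => blockD n (i'+1)) ++ [n-1, n]

/-- Standard inner product on `ℤ^n` (coordinates `1,…,n`; index `0` unused). -/
def ipD (n : ℕ) (v u : ℕ → ℤ) : ℤ := ∑ j ∈ Finset.range (n+1), v j * u j

/-- The roots `η₁, …, η_k`: those prior to `α_i` in the induced order of `w` with
`(α_i | η) < 0`, in order (as a 0-indexed list). -/
def etaListD (n i : ℕ) (w : List ℕ) : List (ℕ → ℤ) :=
  ((rootSeqD n w).takeWhile fun β => decide (β ≠ alphaD n i)).filter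
    fun η => decide (ipD n (alphaD n i) η < 0)

/-- The bracket string `S_i^𝐢(𝐜)`: for each `j`, `c_(ν_(j+1))` ')'s labeled `j` followed by
`c_(η_(j+1))` '('s labeled `j`, and finally `c_(α_i)` ')'s labeled `k`. Here `ν = η + α_i`. -/
def brStringD (n i : ℕ) (w : List ℕ) (c : (ℕ → ℤ) → ℕ) : List (Bool × ℕ) :=
  ((List.range (etaListD n i w).length).flatMap fun j =>
    List.replicate (c ((etaListD n i w).getD j 0 + alphaD n i)) (false, j) ++
    List.replicate (c ((etaListD n i w).getD j 0)) (true, j)) ++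
  List.replicate (c (alphaD n i)) (false, (etaListD n i w).length)

/-! Each block `(b, …, n-1, n, n-2, …, b)` of `𝐢^D` equals `s_b · (block b+1) · s_b`, so it acts
on `ℤ^n` by negating `e_b` and `e_n`. Hence the roots contributed by block `b` are
`β_{b,b}, …, β_{b,n-2}`, then `β_{b,n-1}` and `γ_{b,n}`, then `γ_{b,n-1}, …, γ_{b,b+1}`; the middle
two come in either order, since the earlier `b-1` blocks act on `e_n` by `(-1)^(b-1)`.
All roots of block `b` have `e_b`-coefficient `1`, whereas `α_i` has `e_b`-coefficient `0` for
`b < i` (and `α_n` for `b ≤ n-2`), so the roots preceding `α_i` are those of the earlier blocks,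
plus possibly the one of `α_{n-1}, α_n` that comes first in the last block, which is orthogonal
to the other. Within block `b` only `β_{b,i-1}, γ_{b,i+1}` (resp. `β_{b,n-2}, β_{b,n-1}`) pair
negatively with `α_i` (resp. `α_n`). -/

namespace List

theorem filter_map_eq_ite {α β : Type*} [DecidableEq α] {l : List α} (hl : l.Nodup)
    (f : α → β) (p : β → Bool) (a : α) (h : ∀ x ∈ l, p (f x) = true ↔ x = a) :
    (l.map f).filter p = if a ∈ l then [f a] else [] := by
  have hfilter : l.filter (p ∘ f) = l.filter (· == a) :=
    filter_congr fun x hx => Bool.eq_iff_iff.mpr ((h x hx).trans beq_iff_eq.symm)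
  rw [filter_map, hfilter, filter_beq]
  split_ifs with ha
  · rw [count_eq_one_of_mem hl ha]; rfl
  · rw [count_eq_zero_of_not_mem ha]; rfl

theorem filter_takeWhile_append {α : Type*} {p q : α → Bool} {l₁ l₂ : List α}
    (h₁ : ∀ x ∈ l₁, q x) (h₂ : (l₂.takeWhile q).filter p = []) :
    ((l₁ ++ l₂).takeWhile q).filter p = l₁.filter p := by
  rw [takeWhile_append_of_pos h₁, filter_append, h₂, append_nil]

theorem flatMap_range_two_mul {β : Type*} (g : ℕ → List β) (N : ℕ) :
    (range (2 * N)).flatMap g = (range N).flatMap fun j => g (2 * j) ++ g (2 * j + 1) := by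
  induction N with
  | zero => rfl
  | succ N ih =>
    rw [show 2 * (N + 1) = 2 * N + 1 + 1 by ring, range_succ, range_succ, flatMap_append,
      flatMap_append, ih, range_succ, flatMap_append]
    simp

theorem flatMap_range_pair {β : Type*} (u v : ℕ → β) (N : ℕ) :
    (range N).flatMap (fun j => [u j, v j]) =
      (range (2 * N)).map fun m => if m % 2 = 0 then u (m / 2) else v (m / 2) := by
  rw [← flatMap_pure_eq_map, flatMap_range_two_mul]
  refine flatMap_congr fun j _ => ?_
  simp [Nat.mul_add_div]

end List

section

open List

lemma alphaD_of_ne {n i : ℕ} (h : i ≠ n) : alphaD n i = betaD i i := by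
  rw [alphaD, if_neg h, betaD]

lemma alphaD_self (n : ℕ) : alphaD n n = gammaD (n - 1) n := by
  rw [alphaD, if_pos rfl, gammaD]

lemma betaD_add_betaD {k k' : ℕ} (j l : ℕ) (h : k + 1 = k') :
    betaD j k + betaD k' l = betaD j l := by
  subst h; simp only [betaD]; abel

lemma gammaD_add_betaD {l l' : ℕ} (j k : ℕ) (h : l + 1 = l') :
    gammaD j l' + betaD k l = gammaD j k := by
  subst h; simp only [betaD, gammaD]; abel

lemma betaD_add_gammaD {k k' : ℕ} (j l : ℕ) (h : k + 1 = k') :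
    betaD j k + gammaD k' l = gammaD j l := by
  subst h; simp only [betaD, gammaD]; abel

lemma betaD_add_gammaD_right {l l' : ℕ} (j k : ℕ) (h : l + 1 = l') :
    betaD j l + gammaD k l' = gammaD j k := by
  subst h; simp only [betaD, gammaD]; abel

lemma actD_append (n : ℕ) (u w : List ℕ) (v : ℕ → ℤ) :
    actD n (u ++ w) v = actD n u (actD n w v) := by
  simp [actD]

lemma rootSeqD_append (n : ℕ) (u w : List ℕ) :
    rootSeqD n (u ++ w) = rootSeqD n u ++ (rootSeqD n w).map (actD n u) := by
  unfold rootSeqD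
  rw [length_append, range_add, map_append, map_map, map_map]
  congr 1
  · refine map_congr_left fun k hk => ?_
    rw [mem_range] at hk
    rw [take_append_of_le_length hk.le, getD_append _ _ _ _ hk]
  · refine map_congr_left fun k _ => ?_
    simp only [Function.comp_apply]
    rw [take_append, getD_append_right _ _ _ _ (by omega), Nat.add_sub_cancel_left,
      take_of_length_le (by omega), actD_append]

lemma rootSeqD_singleton (n a : ℕ) : rootSeqD n [a] = [alphaD n a] := by
  simp [rootSeqD, actD]

lemma rootSeqD_cons (n a : ℕ) (w : List ℕ) :
    rootSeqD n (a :: w) = alphaD n a :: (rootSeqD n w).map (sDap n a) := by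
  rw [← singleton_append, rootSeqD_append, rootSeqD_singleton]
  rfl

lemma blockD_eq_range' (n b : ℕ) :
    blockD n b = range' b (n - b) ++ n :: (range' b (n - 1 - b)).reverse := by
  simp [blockD, range'_eq_map_range, add_comm]

lemma blockD_pred (n : ℕ) (hn : 1 ≤ n) : blockD n (n - 1) = [n - 1, n] := by
  rw [blockD_eq_range', show n - (n - 1) = 1 by omega, show n - 1 - (n - 1) = 0 by omega]
  rfl

lemma blockD_eq_cons (n b : ℕ) (hb : b + 2 ≤ n) :
    blockD n b = b :: (blockD n (b + 1) ++ [b]) := by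
  rw [blockD_eq_range', blockD_eq_range', show n - b = n - (b + 1) + 1 by omega,
    show n - 1 - b = n - 1 - (b + 1) + 1 by omega, range'_succ, range'_succ]
  simp

lemma sDap_betaD_succ (n b k : ℕ) (hb : b ≠ n) (hk : b + 1 ≤ k) :
    sDap n b (betaD (b + 1) k) = betaD b k := by
  funext m
  simp only [sDap, if_neg hb, betaD, stdE, Pi.sub_apply]
  split_ifs <;> omega

lemma sDap_gammaD_succ (n b k : ℕ) (hb : b ≠ n) (hk : b + 2 ≤ k) :
    sDap n b (gammaD (b + 1) k) = gammaD b k := by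
  funext m
  simp only [sDap, if_neg hb, gammaD, stdE, Pi.add_apply]
  split_ifs <;> omega

lemma actD_blockD (n b : ℕ) (hbn : b + 1 ≤ n) (v : ℕ → ℤ) :
    actD n (blockD n b) v = fun m => if m = b ∨ m = n then -v m else v m := by
  induction h : n - 1 - b generalizing b v with
  | zero =>
    obtain rfl : b = n - 1 := by omega
    rw [blockD_pred n (by omega)]
    funext m
    simp only [actD, foldr_cons, foldr_nil, sDap, if_neg (show n - 1 ≠ n by omega), if_pos rfl]
    split_ifs <;> subst_vars <;> first | omega | rfl | simp_all
  | succ d ih =>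
    rw [blockD_eq_cons n b (by omega), ← singleton_append, actD_append, actD_append,
      ih (b + 1) (by omega) _ (by omega)]
    funext m
    simp only [actD, foldr_cons, foldr_nil, sDap, if_neg (show b ≠ n by omega)]
    split_ifs <;> subst_vars <;> first | omega | rfl | simp_all

def betaChainD (n b : ℕ) : List (ℕ → ℤ) := (range' b (n - 1 - b)).map (betaD b)

def gammaChainD (n b : ℕ) : List (ℕ → ℤ) := ((range' (b + 1) (n - 1 - b)).map (gammaD b)).reverse

lemma rootSeqD_blockD (n b : ℕ) (hbn : b + 1 ≤ n) :
    rootSeqD n (blockD n b) =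
      betaChainD n b ++ [betaD b (n - 1), gammaD b n] ++ gammaChainD n b := by
  induction h : n - 1 - b generalizing b with
  | zero =>
    obtain rfl : b = n - 1 := by omega
    rw [blockD_pred n (by omega), rootSeqD_cons, rootSeqD_singleton, alphaD_of_ne (by omega),
      alphaD_self]
    have hswap : sDap n (n - 1) (gammaD (n - 1) n) = gammaD (n - 1) n := by
      funext m
      simp only [sDap, if_neg (show n - 1 ≠ n by omega), gammaD, stdE, Pi.add_apply]
      split_ifs <;> omega
    simp [betaChainD, gammaChainD, hswap, show n - 1 + 1 = n by omega]
  | succ d ih =>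
    rw [blockD_eq_cons n b (by omega), rootSeqD_cons, rootSeqD_append, rootSeqD_singleton,
      ih (b + 1) (by omega) (by omega)]
    have hb' : b ≠ n := by omega
    have hβ : betaChainD n b = betaD b b :: (betaChainD n (b + 1)).map (sDap n b) := by
      rw [betaChainD, betaChainD, show n - 1 - b = n - 1 - (b + 1) + 1 by omega, range'_succ,
        map_cons, map_map]
      congr 1
      refine map_congr_left fun k hk => (sDap_betaD_succ n b k hb' ?_).symm
      simp only [mem_range'_1] at hk
      omega
    have hγ : gammaChainD n b =
        (gammaChainD n (b + 1)).map (sDap n b) ++ [gammaD b (b + 1)] := by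
      rw [gammaChainD, gammaChainD, show n - 1 - b = n - 1 - (b + 1) + 1 by omega, range'_succ,
        map_cons, reverse_cons, map_reverse, map_map]
      congr 2
      refine map_congr_left fun k hk => (sDap_gammaD_succ n b k hb' ?_).symm
      simp only [mem_range'_1] at hk
      omega
    have hlast : sDap n b (actD n (blockD n (b + 1)) (betaD b b)) = gammaD b (b + 1) := by
      rw [actD_blockD n (b + 1) (by omega)]
      funext m
      simp only [sDap, if_neg hb', betaD, gammaD, stdE, Pi.add_apply, Pi.sub_apply, true_or,
        if_true]
      split_ifs <;> omega
    simp [hβ, hγ, alphaD_of_ne hb', hlast, sDap_betaD_succ n b _ hb' (show b + 1 ≤ n - 1 by omega),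
      sDap_gammaD_succ n b _ hb' (show b + 2 ≤ n by omega)]

def prefixD (n j : ℕ) : List ℕ := (range j).flatMap fun i => blockD n (i + 1)

lemma actD_prefixD (n j : ℕ) (hj : j + 1 ≤ n) (v : ℕ → ℤ) :
    actD n (prefixD n j) v =
      fun m => if 1 ≤ m ∧ m ≤ j then -v m else if m = n then (-1) ^ j * v m else v m := by
  induction j generalizing v with
  | zero =>
    funext m
    simp only [prefixD, range_zero, flatMap_nil, actD, foldr_nil, pow_zero, one_mul]
    split_ifs <;> omega
  | succ j ih =>
    rw [prefixD, range_succ, flatMap_append, flatMap_singleton, ← prefixD, actD_append,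
      ih (by omega), actD_blockD n (j + 1) (by omega)]
    funext m
    simp only
    split_ifs <;> first | omega | ring

def topPairD (n b : ℕ) : List (ℕ → ℤ) :=
  if Odd b then [betaD b (n - 1), gammaD b n] else [gammaD b n, betaD b (n - 1)]

def blockRootsD (n b : ℕ) : List (ℕ → ℤ) := betaChainD n b ++ topPairD n b ++ gammaChainD n b

lemma actD_prefixD_of_vanish (n j : ℕ) (hj : j + 1 ≤ n) {v : ℕ → ℤ}
    (hv : ∀ m, 1 ≤ m → m ≤ j → v m = 0) (hvn : v n = 0) : actD n (prefixD n j) v = v := by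
  rw [actD_prefixD n j hj]
  funext m
  split_ifs with h₁ h₂
  · simp [hv m h₁.1 h₁.2]
  · simp [h₂, hvn]
  · rfl

lemma actD_prefixD_topPair (n j b : ℕ) (hjb : j < b) (hbn : b < n) :
    actD n (prefixD n j) (betaD b (n - 1)) =
        (if Even j then betaD b (n - 1) else gammaD b n) ∧
      actD n (prefixD n j) (gammaD b n) =
        (if Even j then gammaD b n else betaD b (n - 1)) := by
  rw [actD_prefixD n j (by omega), actD_prefixD n j (by omega)]
  rcases Nat.even_or_odd j with hj | hj
  · simp only [if_pos hj, hj.neg_one_pow, one_mul]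
    constructor <;> funext m <;> simp only [betaD, gammaD, stdE, Pi.add_apply, Pi.sub_apply] <;>
      split_ifs <;> omega
  · simp only [if_neg (Nat.not_even_iff_odd.mpr hj), hj.neg_one_pow, neg_one_mul]
    constructor <;> funext m <;> simp only [betaD, gammaD, stdE, Pi.add_apply, Pi.sub_apply] <;>
      split_ifs <;> omega

lemma map_actD_prefixD_rootSeqD_blockD (n j : ℕ) (hj : j + 2 ≤ n) :
    (rootSeqD n (blockD n (j + 1))).map (actD n (prefixD n j)) = blockRootsD n (j + 1) := by
  rw [rootSeqD_blockD n (j + 1) (by omega), blockRootsD, map_append, map_append]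
  obtain ⟨hβ, hγ⟩ := actD_prefixD_topPair n j (j + 1) (by omega) (by omega)
  congr 1
  congr 1
  · refine (map_congr_left fun x hx => ?_).trans (map_id _)
    simp only [betaChainD, mem_map, mem_range'_1] at hx
    obtain ⟨k, hk, rfl⟩ := hx
    refine actD_prefixD_of_vanish n j (by omega) (fun m h₁ h₂ => ?_) ?_ <;>
      simp only [betaD, stdE, Pi.sub_apply] <;> split_ifs <;> omega
  · by_cases hj : Even j <;> simp [topPairD, hβ, hγ, hj, Nat.odd_add_one]
  · refine (map_congr_left fun x hx => ?_).trans (map_id _)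
    simp only [gammaChainD, mem_reverse, mem_map, mem_range'_1] at hx
    obtain ⟨k, hk, rfl⟩ := hx
    refine actD_prefixD_of_vanish n j (by omega) (fun m h₁ h₂ => ?_) ?_ <;>
      simp only [gammaD, stdE, Pi.add_apply] <;> split_ifs <;> omega

lemma rootSeqD_prefixD (n j : ℕ) (hj : j + 1 ≤ n) :
    rootSeqD n (prefixD n j) = (range j).flatMap fun i => blockRootsD n (i + 1) := by
  induction j with
  | zero => rfl
  | succ j ih =>
    rw [prefixD, range_succ, flatMap_append, flatMap_singleton, ← prefixD, rootSeqD_append,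
      ih (by omega), map_actD_prefixD_rootSeqD_blockD n j (by omega), flatMap_append,
      flatMap_singleton]

lemma rootSeqD_wordD (n : ℕ) (hn : 2 ≤ n) :
    rootSeqD n (wordD n) = (range (n - 1)).flatMap fun i => blockRootsD n (i + 1) := by
  have hword : wordD n = prefixD n (n - 1) := by
    rw [prefixD, show n - 1 = n - 2 + 1 by omega, range_succ, flatMap_append, flatMap_singleton,
      show n - 2 + 1 = n - 1 by omega, blockD_pred n (by omega), wordD]
  rw [hword, rootSeqD_prefixD n (n - 1) (by omega)]

lemma ipD_stdE (n a : ℕ) (ha : a ≤ n) (u : ℕ → ℤ) : ipD n (stdE a) u = u a := by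
  rw [ipD, Finset.sum_eq_single_of_mem a (Finset.mem_range.mpr (by omega))]
  · simp [stdE]
  · intro b _ hb; simp [stdE, hb]

lemma ipD_alphaD_of_lt {n i : ℕ} (hi : i < n) (u : ℕ → ℤ) :
    ipD n (alphaD n i) u = u i - u (i + 1) := by
  rw [alphaD, if_neg hi.ne, ← ipD_stdE n i hi.le u, ← ipD_stdE n (i + 1) hi u, ipD, ipD, ipD,
    ← Finset.sum_sub_distrib]
  simp [sub_mul]

lemma ipD_alphaD_self (n : ℕ) (u : ℕ → ℤ) :
    ipD n (alphaD n n) u = u (n - 1) + u n := by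
  rw [alphaD, if_pos rfl, ← ipD_stdE n (n - 1) (Nat.sub_le n 1) u, ← ipD_stdE n n le_rfl u,
    ipD, ipD, ipD, ← Finset.sum_add_distrib]
  simp [add_mul]

lemma filter_blockRootsD_of_lt {n i b : ℕ} (hbi : b < i) (hin : i < n) :
    (blockRootsD n b).filter (fun η => decide (ipD n (alphaD n i) η < 0)) =
      [betaD b (i - 1), gammaD b (i + 1)] := by
  have hβ : (betaChainD n b).filter (fun η => decide (ipD n (alphaD n i) η < 0)) =
      [betaD b (i - 1)] := by
    rw [betaChainD, filter_map_eq_ite nodup_range' _ _ (i - 1), if_pos (by simp; omega)]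
    intro k hk
    simp only [mem_range'_1] at hk
    simp only [decide_eq_true_eq, ipD_alphaD_of_lt hin, betaD, stdE, Pi.sub_apply]
    split_ifs <;> omega
  have hpair : (topPairD n b).filter (fun η => decide (ipD n (alphaD n i) η < 0)) =
      if i + 1 = n then [gammaD b n] else [] := by
    have hβ' : ¬ ipD n (alphaD n i) (betaD b (n - 1)) < 0 := by
      simp only [ipD_alphaD_of_lt hin, betaD, stdE, Pi.sub_apply]
      split_ifs <;> omega
    have hγ' : ipD n (alphaD n i) (gammaD b n) < 0 ↔ i + 1 = n := by
      simp only [ipD_alphaD_of_lt hin, gammaD, stdE, Pi.add_apply]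
      split_ifs <;> omega
    unfold topPairD
    split_ifs <;> simp_all
  have hγ : (gammaChainD n b).filter (fun η => decide (ipD n (alphaD n i) η < 0)) =
      if i + 1 = n then [] else [gammaD b (i + 1)] := by
    rw [gammaChainD, filter_reverse, filter_map_eq_ite nodup_range' _ _ (i + 1)]
    · split_ifs <;> simp_all <;> omega
    intro k hk
    simp only [mem_range'_1] at hk
    simp only [decide_eq_true_eq, ipD_alphaD_of_lt hin, gammaD, stdE, Pi.add_apply]
    split_ifs <;> omega
  rw [blockRootsD, filter_append, filter_append, hβ, hpair, hγ]
  split_ifs with h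
  · rw [h]; rfl
  · rfl

lemma filter_blockRootsD_self {n b : ℕ} (hbn : b + 2 ≤ n) :
    (blockRootsD n b).filter (fun η => decide (ipD n (alphaD n n) η < 0)) =
      [betaD b (n - 2), betaD b (n - 1)] := by
  have hβ : (betaChainD n b).filter (fun η => decide (ipD n (alphaD n n) η < 0)) =
      [betaD b (n - 2)] := by
    rw [betaChainD, filter_map_eq_ite nodup_range' _ _ (n - 2), if_pos (by simp; omega)]
    intro k hk
    simp only [mem_range'_1] at hk
    simp only [decide_eq_true_eq, ipD_alphaD_self n, betaD, stdE, Pi.sub_apply]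
    split_ifs <;> omega
  have hpair : (topPairD n b).filter (fun η => decide (ipD n (alphaD n n) η < 0)) =
      [betaD b (n - 1)] := by
    have hβ' : ipD n (alphaD n n) (betaD b (n - 1)) < 0 := by
      simp only [ipD_alphaD_self n, betaD, stdE, Pi.sub_apply]
      split_ifs <;> omega
    have hγ' : ¬ ipD n (alphaD n n) (gammaD b n) < 0 := by
      simp only [ipD_alphaD_self n, gammaD, stdE, Pi.add_apply]
      split_ifs <;> omega
    unfold topPairD
    split_ifs <;> simp [hβ', hγ']
  have hγ : (gammaChainD n b).filter (fun η => decide (ipD n (alphaD n n) η < 0)) = [] := by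
    refine filter_eq_nil_iff.mpr fun η hη => ?_
    simp only [gammaChainD, mem_reverse, mem_map, mem_range'_1] at hη
    obtain ⟨k, hk, rfl⟩ := hη
    simp only [decide_eq_true_eq, ipD_alphaD_self n, gammaD, stdE, Pi.add_apply]
    split_ifs <;> omega
  rw [blockRootsD, filter_append, filter_append, hβ, hpair, hγ]
  rfl

lemma blockRootsD_apply_self {n b : ℕ} (hbn : b < n) {x : ℕ → ℤ} (hx : x ∈ blockRootsD n b) :
    x b = 1 := by
  simp only [blockRootsD, betaChainD, gammaChainD, topPairD, mem_append, mem_reverse, mem_map,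
    mem_range'_1] at hx
  rcases hx with (⟨k, hk, rfl⟩ | hx) | ⟨k, hk, rfl⟩
  · simp [betaD, stdE]; omega
  · split_ifs at hx <;> rcases mem_pair.mp hx with rfl | rfl <;>
      simp [betaD, gammaD, stdE] <;> omega
  · simp [gammaD, stdE]; omega

lemma ne_of_mem_flatMap_blockRootsD {n k : ℕ} (hk : k < n) {v : ℕ → ℤ}
    (hv : ∀ m, 1 ≤ m → m ≤ k → v m ≠ 1) {x : ℕ → ℤ}
    (hx : x ∈ (range k).flatMap fun j => blockRootsD n (j + 1)) : x ≠ v := by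
  rintro rfl
  obtain ⟨j, hj, hxj⟩ := mem_flatMap.mp hx
  rw [mem_range] at hj
  exact hv (j + 1) (by omega) (by omega) (blockRootsD_apply_self (by omega) hxj)

lemma blockRootsD_pred (n : ℕ) : blockRootsD n (n - 1) = topPairD n (n - 1) := by
  simp [blockRootsD, betaChainD, gammaChainD]

lemma rootSeqD_wordD_eq_append_topPairD (n : ℕ) (hn : 2 ≤ n) :
    rootSeqD n (wordD n) =
      (range (n - 2)).flatMap (fun j => blockRootsD n (j + 1)) ++ topPairD n (n - 1) := by
  rw [rootSeqD_wordD n hn, show n - 1 = n - 2 + 1 by omega, range_succ, flatMap_append,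
    flatMap_singleton, show n - 2 + 1 = n - 1 by omega, blockRootsD_pred]

lemma exists_rootSeqD_wordD_eq_append_cons {n i : ℕ} (hi : 1 ≤ i) (hin : i + 2 ≤ n) :
    ∃ rest, rootSeqD n (wordD n) =
      (range (i - 1)).flatMap (fun j => blockRootsD n (j + 1)) ++ alphaD n i :: rest := by
  rw [rootSeqD_wordD n (by omega), show n - 1 = (i - 1) + (n - 1 - (i - 1)) by omega, range_add,
    flatMap_append, show n - 1 - (i - 1) = n - 1 - i + 1 by omega, range_succ_eq_map, map_cons,
    flatMap_cons, show i - 1 + 0 + 1 = i by omega, blockRootsD, betaChainD,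
    show n - 1 - i = n - 2 - i + 1 by omega, range'_succ, map_cons, alphaD_of_ne (by omega)]
  exact ⟨_, rfl⟩

lemma filter_takeWhile_topPairD_pred {n i : ℕ} (hn : 1 ≤ n) (hi : i = n - 1 ∨ i = n) :
    ((topPairD n (n - 1)).takeWhile (fun β => decide (β ≠ alphaD n i))).filter
      (fun η => decide (ipD n (alphaD n i) η < 0)) = [] := by
  have hpair : topPairD n (n - 1) ⊆ [alphaD n (n - 1), alphaD n n] := by
    rw [alphaD_of_ne (by omega), alphaD_self]
    intro x hx
    unfold topPairD at hx
    split_ifs at hx <;> simp_all [or_comm]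
  refine filter_eq_nil_iff.mpr fun x hx => ?_
  have hxi : x ≠ alphaD n i := by simpa using mem_takeWhile_imp hx
  have hx' := hpair (takeWhile_subset _ hx)
  simp only [mem_cons, not_mem_nil, or_false] at hx'
  rcases hi with rfl | rfl <;> rcases hx' with rfl | rfl <;> simp only [ne_eq, not_true] at hxi
  · rw [ipD_alphaD_of_lt (by omega), alphaD_self]
    simp [gammaD, stdE]; omega
  · rw [ipD_alphaD_self, alphaD_of_ne (by omega)]
    simp [betaD, stdE]; omega

lemma etaListD_wordD_of_lt {n i : ℕ} (hi : 1 ≤ i) (hin : i < n) :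
    etaListD n i (wordD n) =
      (range (i - 1)).flatMap fun j => [betaD (j + 1) (i - 1), gammaD (j + 1) (i + 1)] := by
  have hprefix : ∀ x ∈ (range (i - 1)).flatMap (fun j => blockRootsD n (j + 1)),
      decide (x ≠ alphaD n i) = true := by
    refine fun x hx => decide_eq_true (ne_of_mem_flatMap_blockRootsD (by omega)
      (fun m h₁ h₂ => ?_) hx)
    simp [alphaD_of_ne hin.ne, betaD, stdE]
    omega
  obtain ⟨tail, hroot, htail⟩ : ∃ tail, rootSeqD n (wordD n) =
      (range (i - 1)).flatMap (fun j => blockRootsD n (j + 1)) ++ tail ∧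
      (tail.takeWhile (fun β => decide (β ≠ alphaD n i))).filter
        (fun η => decide (ipD n (alphaD n i) η < 0)) = [] := by
    rcases Nat.lt_or_ge (i + 1) n with h | h
    · obtain ⟨rest, hrest⟩ := exists_rootSeqD_wordD_eq_append_cons (n := n) hi (by omega)
      exact ⟨_, hrest, by simp⟩
    · obtain rfl : i = n - 1 := by omega
      refine ⟨_, ?_, filter_takeWhile_topPairD_pred (by omega) (Or.inl rfl)⟩
      rw [rootSeqD_wordD_eq_append_topPairD n (by omega), show n - 2 = n - 1 - 1 by omega]
  rw [etaListD, hroot, filter_takeWhile_append hprefix htail, filter_flatMap]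
  exact flatMap_congr fun j hj => filter_blockRootsD_of_lt (by simp at hj; omega) hin

lemma etaListD_wordD_self {n : ℕ} (hn : 2 ≤ n) :
    etaListD n n (wordD n) =
      (range (n - 2)).flatMap fun j => [betaD (j + 1) (n - 2), betaD (j + 1) (n - 1)] := by
  have hprefix : ∀ x ∈ (range (n - 2)).flatMap (fun j => blockRootsD n (j + 1)),
      decide (x ≠ alphaD n n) = true := by
    refine fun x hx => decide_eq_true (ne_of_mem_flatMap_blockRootsD (by omega)
      (fun m h₁ h₂ => ?_) hx)
    simp [alphaD_self, gammaD, stdE]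
    omega
  rw [etaListD, rootSeqD_wordD_eq_append_topPairD n hn,
    filter_takeWhile_append hprefix (filter_takeWhile_topPairD_pred (by omega) (Or.inr rfl)),
    filter_flatMap]
  exact flatMap_congr fun j hj => filter_blockRootsD_self (by simp at hj; omega)

lemma brStringD_of_etaListD_eq {n i N : ℕ} {w : List ℕ} {u v : ℕ → ℕ → ℤ}
    (h : etaListD n i w = (range N).flatMap fun j => [u j, v j]) (c : (ℕ → ℤ) → ℕ) :
    brStringD n i w c =
      ((range N).flatMap fun j =>
        replicate (c (u j + alphaD n i)) (false, 2 * j) ++ replicate (c (u j)) (true, 2 * j) ++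
        replicate (c (v j + alphaD n i)) (false, 2 * j + 1) ++
        replicate (c (v j)) (true, 2 * j + 1)) ++
      replicate (c (alphaD n i)) (false, 2 * N) := by
  rw [brStringD, h, flatMap_range_pair, length_map, length_range, flatMap_range_two_mul]
  congr 1
  refine flatMap_congr fun j hj => ?_
  simp only [mem_range] at hj
  simp [getD_eq_getElem?_getD, Nat.mul_add_div, hj, show 2 * j + 1 < 2 * N by omega]

end

/-- For the reduced word `𝐢^D` of type `D_n`: (a) for `1 ≤ i ≤ n-1` the
roots `η` preceding `α_i = β_(i,i)` in the induced order with `(α_i | η) < 0` are exactly,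
in order, `β_(1,i-1), γ_(1,i+1), β_(2,i-1), γ_(2,i+1), …, β_(i-1,i-1), γ_(i-1,i+1)`, with
`ν = η + α_i` given by `β_(j,i)` for `η = β_(j,i-1)` and `γ_(j,i)` for `η = γ_(j,i+1)`;
(b) for `i = n` they are `β_(1,n-2), β_(1,n-1), …, β_(n-2,n-2), β_(n-2,n-1)`, with
`ν = γ_(j,n)` for `η = β_(j,n-2)` and `ν = γ_(j,n-1)` for `η = β_(j,n-1)`. Consequently the
bracket string `S_i^(𝐢^D)(𝐜)` has the displayed explicit form. -/
theorem statement16 (n : ℕ) (hn : 4 ≤ n) :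
    (∀ i, 1 ≤ i → i ≤ n-1 →
      (etaListD n i (wordD n) =
        (List.range (i-1)).flatMap fun j' => [betaD (j'+1) (i-1), gammaD (j'+1) (i+1)]) ∧
      (∀ j', j' < i-1 →
        betaD (j'+1) (i-1) + alphaD n i = betaD (j'+1) i ∧
        gammaD (j'+1) (i+1) + alphaD n i = gammaD (j'+1) i) ∧
      (∀ c : (ℕ → ℤ) → ℕ,
        brStringD n i (wordD n) c =
          ((List.range (i-1)).flatMap fun j' =>
            List.replicate (c (betaD (j'+1) i)) (false, 2*j') ++
            List.replicate (c (betaD (j'+1) (i-1))) (true, 2*j') ++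
            List.replicate (c (gammaD (j'+1) i)) (false, 2*j'+1) ++
            List.replicate (c (gammaD (j'+1) (i+1))) (true, 2*j'+1)) ++
          List.replicate (c (betaD i i)) (false, 2*(i-1)))) ∧
    ((etaListD n n (wordD n) =
        (List.range (n-2)).flatMap fun j' => [betaD (j'+1) (n-2), betaD (j'+1) (n-1)]) ∧
      (∀ j', j' < n-2 →
        betaD (j'+1) (n-2) + alphaD n n = gammaD (j'+1) n ∧
        betaD (j'+1) (n-1) + alphaD n n = gammaD (j'+1) (n-1)) ∧
      (∀ c : (ℕ → ℤ) → ℕ,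
        brStringD n n (wordD n) c =
          ((List.range (n-2)).flatMap fun j' =>
            List.replicate (c (gammaD (j'+1) n)) (false, 2*j') ++
            List.replicate (c (betaD (j'+1) (n-2))) (true, 2*j') ++
            List.replicate (c (gammaD (j'+1) (n-1))) (false, 2*j'+1) ++
            List.replicate (c (betaD (j'+1) (n-1))) (true, 2*j'+1)) ++
          List.replicate (c (gammaD (n-1) n)) (false, 2*(n-2)))) := by
  refine ⟨fun i hi hin => ?_, ?_⟩
  · have hβ (j : ℕ) : betaD (j + 1) (i - 1) + alphaD n i = betaD (j + 1) i := by
      rw [alphaD_of_ne (by omega), betaD_add_betaD _ _ (by omega)]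
    have hγ (j : ℕ) : gammaD (j + 1) (i + 1) + alphaD n i = gammaD (j + 1) i := by
      rw [alphaD_of_ne (by omega), gammaD_add_betaD _ _ rfl]
    refine ⟨etaListD_wordD_of_lt hi (by omega), fun j _ => ⟨hβ j, hγ j⟩, fun c => ?_⟩
    rw [brStringD_of_etaListD_eq (etaListD_wordD_of_lt hi (by omega))]
    simp only [hβ, hγ]
    rw [alphaD_of_ne (by omega)]
  · have hβ (j : ℕ) : betaD (j + 1) (n - 2) + alphaD n n = gammaD (j + 1) n := by
      rw [alphaD_self, betaD_add_gammaD _ _ (by omega)]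
    have hγ (j : ℕ) : betaD (j + 1) (n - 1) + alphaD n n = gammaD (j + 1) (n - 1) := by
      rw [alphaD_self, betaD_add_gammaD_right _ _ (by omega)]
    refine ⟨etaListD_wordD_self (by omega), fun j _ => ⟨hβ j, hγ j⟩, fun c => ?_⟩
    rw [brStringD_of_etaListD_eq (etaListD_wordD_self (by omega))]
    simp only [hβ, hγ]
    rw [alphaD_self]
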